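/- arXiv:0802.0316 — 4 statements merged into one kernel-verified Lean document; each statement's English description precedes it below -/
import Mathlib

section
/- For all k, j ∈ ℤ³_H one has (1/|Ω|)∫_Ω φ_k(t)·conj(φ_j(t)) dt = δ_{k,j}, and the system {φ_j : j ∈ ℤ³_H} is a complete orthonormal system (an orthonormal basis) of L²(Ω) with respect to the inner product ⟨f,g⟩ := (1/|Ω|)∫_Ω f(t)·conj(g(t)) dt. -/
noncomputable section

open MeasureTheory Filter ComplexConjugate

/-- The (half-open) regular hexagon `Ω` in the plane `t₁+t₂+t₃=0`, in the
coordinates `(t₁,t₂)` (so that `t₃ = -(t₁+t₂)`):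
`-1 ≤ t₁ < 1`, `-1 ≤ t₂ < 1`, `-1 ≤ -t₃ = t₁+t₂ < 1`. -/
def Hex : Set (ℝ × ℝ) :=
  {t | -1 ≤ t.1 ∧ t.1 < 1 ∧ -1 ≤ t.2 ∧ t.2 < 1 ∧ -1 ≤ t.1 + t.2 ∧ t.1 + t.2 < 1}

/-- The area `|Ω|` of the hexagon. -/
def hexVol : ℝ := (MeasureTheory.volume Hex).toReal

/-- The exponential `φ_j(t) = exp(2πi(j₁t₁+j₂t₂+j₃t₃)/3)` for `j ∈ ℤ³_H`,
in coordinates: `j = (j₁,j₂)`, `j₃ = -(j₁+j₂)`, `t = (t₁,t₂)`, `t₃ = -(t₁+t₂)`,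
so that `j₃t₃ = (j₁+j₂)(t₁+t₂)`. -/
def phiH (j : ℤ × ℤ) (t : ℝ × ℝ) : ℂ :=
  Complex.exp (2 * Real.pi * Complex.I *
    ((j.1 : ℂ) * t.1 + (j.2 : ℂ) * t.2 + ((j.1 : ℂ) + (j.2 : ℂ)) * ((t.1 : ℂ) + (t.2 : ℂ))) / 3)

/-! In the coordinates `x = ((t₁ - t₂) / 3, t₂)` every `φ_j` is the character `mFourier n` of the
torus `ℝ² / ℤ²`, where `n = (2j₁ + j₂, j₁ + j₂)` runs through `ℤ²` exactly once. `Ω` is a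
fundamental domain of the lattice `x⁻¹(ℤ²)`: cutting `Ω` into three pieces and moving two of them
by lattice vectors gives a parallelogram that `x` maps onto a unit square, with Jacobian `1/3`.
So `t ↦ x mod ℤ²` is injective on `Ω` and carries Lebesgue measure on `Ω` to three times the Haar
probability measure of the torus; composing with it turns the Fourier basis of `L²` of the torus into
the system `φ_j`, and both orthonormality and completeness are transported. -/

open Set UnitAddTorus
open scoped ENNReal

section Transfer

variable {X Y E ι : Type*} [MeasurableSpace X] [StandardBorelSpace X] [MeasurableSpace Y]
  [MeasurableSpace.CountablySeparated Y]

/-- By Lusin–Souslin, `π` restricted to `s` is a measurable embedding, along which `f` extends. -/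
theorem exists_measurable_comp_eqOn [MeasurableSpace E] [Nonempty E] {s : Set X}
    (hs : MeasurableSet s) {π : X → Y} (hπ : Measurable π) (hinj : InjOn π s) {f : X → E}
    (hf : Measurable f) : ∃ g : Y → E, Measurable g ∧ EqOn (g ∘ π) f s := by
  have : StandardBorelSpace s := hs.standardBorel
  obtain ⟨g, hg, hgf⟩ := ((hπ.comp measurable_subtype_coe).measurableEmbedding
    hinj.injective).exists_measurable_extend (hf.comp measurable_subtype_coe) fun _ => ‹_›
  exact ⟨g, hg, fun x hx => congrFun hgf ⟨x, hx⟩⟩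

theorem ae_eq_zero_of_forall_setIntegral_mul_conj_comp_eq_zero {μ : Measure X} {ν : Measure Y}
    {s : Set X} (hs : MeasurableSet s) {π : X → Y} (hπ : MeasurePreserving π (μ.restrict s) ν)
    (hinj : InjOn π s) {p : ℝ≥0∞} {e : ι → Y → ℂ} (he : ∀ i, Measurable (e i))
    (hcomplete : ∀ g : Y → ℂ, MemLp g p ν → (∀ i, ∫ y, g y * conj (e i y) ∂ν = 0) → g =ᵐ[ν] 0)
    {f : X → ℂ} (hf : MemLp f p (μ.restrict s))
    (horth : ∀ i, ∫ x in s, f x * conj (e i (π x)) ∂μ = 0) :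
    f =ᵐ[μ.restrict s] 0 := by
  obtain ⟨g, hg, hgf⟩ :=
    exists_measurable_comp_eqOn hs hπ.measurable hinj hf.1.aemeasurable.measurable_mk
  have hgπ : g ∘ π =ᵐ[μ.restrict s] f :=
    EventuallyEq.trans ((ae_restrict_iff' hs).2 (ae_of_all _ hgf)) hf.1.aemeasurable.ae_eq_mk.symm
  have hg0 : g =ᵐ[ν] 0 := by
    refine hcomplete g ?_ fun i => ?_
    · rw [← hπ.map_eq, memLp_map_measure_iff hg.aestronglyMeasurable hπ.aemeasurable]
      exact hf.ae_eq hgπ.symm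
    · rw [← hπ.map_eq, integral_map hπ.aemeasurable
        (show Measurable fun y => g y * conj (e i y) from
          hg.mul (Complex.continuous_conj.measurable.comp (he i))).aestronglyMeasurable, ← horth i]
      exact integral_congr_ae (hgπ.mul ae_eq_rfl)
  filter_upwards [hgπ, hπ.quasiMeasurePreserving.ae hg0] with x hx hx0
  rw [← hx]
  exact hx0

end Transfer

section Torus

/-- The measure on which `UnitAddTorus.mFourierBasis` is built: the product of the
`haarAddCircle`s, which is not syntactically the global `volume` of `UnitAddTorus d`. -/
abbrev haarTorus (d : Type*) [Fintype d] : Measure (UnitAddTorus d) :=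
  Measure.pi fun _ => AddCircle.haarAddCircle

variable {d : Type*} [Fintype d]

theorem integral_mFourier_mul_conj (m n : d → ℤ) :
    ∫ x, mFourier m x * conj (mFourier n x) ∂haarTorus d = if n = m then 1 else 0 := by
  have h := orthonormal_iff_ite.1 orthonormal_mFourier n m
  rw [ContinuousMap.inner_toLp] at h
  exact h

theorem ae_eq_zero_of_forall_integral_mul_conj_mFourier_eq_zero {c : ℝ≥0∞} (hc : c ≠ ∞)
    {g : UnitAddTorus d → ℂ} (hg : MemLp g 2 (c • haarTorus d))
    (horth : ∀ n, ∫ x, g x * conj (mFourier n x) ∂(c • haarTorus d) = 0) :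
    g =ᵐ[c • haarTorus d] 0 := by
  rcases eq_or_ne c 0 with rfl | hc0
  · simp [EventuallyEq]
  have hg' : MemLp g 2 (haarTorus d) := hg.of_measure_le_smul (ENNReal.inv_ne_top.2 hc0)
    (by rw [smul_smul, ENNReal.inv_mul_cancel hc0 hc, one_smul])
  have hrepr : mFourierBasis.repr (hg'.toLp g) = 0 := by
    ext n
    have h := horth n
    rw [integral_smul_measure, smul_eq_zero, ENNReal.toReal_eq_zero_iff] at h
    rw [mFourierBasis_repr, mFourierCoeff, lp.coeFn_zero, Pi.zero_apply,
      ← h.resolve_left (not_or.2 ⟨hc0, hc⟩)]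
    refine integral_congr_ae ?_
    filter_upwards [hg'.coeFn_toLp] with x hx
    rw [hx, mFourier_neg, smul_eq_mul, mul_comm]
  have hg0 : g =ᵐ[haarTorus d] 0 := by
    have := hg'.coeFn_toLp
    rw [mFourierBasis.repr.map_eq_zero_iff.1 hrepr] at this
    exact this.symm.trans (Lp.coeFn_zero _ _ _)
  exact Measure.ae_smul_measure hg0 c

theorem map_coe_volume_restrict_pi_Ico (a : d → ℝ) :
    Measure.map (fun x i => (x i : UnitAddCircle))
      (volume.restrict (univ.pi fun i => Ico (a i) (a i + 1))) = haarTorus d := by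
  have hmk (i : d) : MeasurePreserving ((↑) : ℝ → UnitAddCircle)
      (volume.restrict (Ioc (a i) (a i + 1))) AddCircle.haarAddCircle := by
    simpa [AddCircle.volume_eq_smul_haarAddCircle] using AddCircle.measurePreserving_mk 1 (a i)
  rw [volume_pi, Measure.restrict_pi_pi]
  simp_rw [Measure.restrict_congr_set Ico_ae_eq_Ioc]
  exact (measurePreserving_pi _ _ hmk).map_eq

end Torus

theorem map_restrict_preimage_add_right {G Y : Type*} [MeasurableSpace G] [AddGroup G]
    [MeasurableAdd G] [MeasurableSpace Y] {μ : Measure G} [μ.IsAddRightInvariant] {π : G → Y}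
    (hπ : Measurable π) {v : G} (hv : ∀ x, π (x + v) = π x) {s : Set G} (hs : MeasurableSet s) :
    Measure.map π (μ.restrict ((· + v) ⁻¹' s)) = Measure.map π (μ.restrict s) := by
  rw [← ((measurePreserving_add_right μ v).restrict_preimage hs).map_eq,
    Measure.map_map hπ (measurable_add_const v), show π ∘ (· + v) = π from funext hv]

def hexCoord (t : ℝ × ℝ) : Fin 2 → ℝ := ![(t.1 - t.2) / 3, t.2]

def hexToTorus (t : ℝ × ℝ) : UnitAddTorus (Fin 2) := fun i => (hexCoord t i : UnitAddCircle)

def hexIndex : ℤ × ℤ ≃ (Fin 2 → ℤ) where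
  toFun j := ![2 * j.1 + j.2, j.1 + j.2]
  invFun n := (n 0 - n 1, 2 * n 1 - n 0)
  left_inv j := by ext <;> simp <;> ring
  right_inv n := by ext i; fin_cases i <;> simp <;> ring

theorem phiH_eq_mFourier (j : ℤ × ℤ) (t : ℝ × ℝ) :
    phiH j t = mFourier (hexIndex j) (hexToTorus t) := by
  simp only [mFourier, ContinuousMap.coe_mk, Fin.prod_univ_two, hexToTorus, fourier_coe_apply,
    hexCoord, hexIndex]
  rw [phiH, ← Complex.exp_add]
  congr 1
  simp
  ring

theorem hexToTorus_add (s t : ℝ × ℝ) : hexToTorus (s + t) = hexToTorus s + hexToTorus t := by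
  ext i
  fin_cases i
  · simp [hexToTorus, hexCoord, add_div, sub_div]
    abel
  · simp [hexToTorus, hexCoord]

theorem hexToTorus_eq_zero_iff {v : ℝ × ℝ} :
    hexToTorus v = 0 ↔ ∃ k m : ℤ, v = (3 * (k : ℝ) + m, (m : ℝ)) := by
  simp only [funext_iff, Fin.forall_fin_two, hexToTorus, hexCoord, Pi.zero_apply,
    AddCircle.coe_eq_zero_iff, zsmul_eq_mul, mul_one, Matrix.cons_val_zero, Matrix.cons_val_one]
  constructor
  · rintro ⟨⟨k, hk⟩, m, hm⟩
    exact ⟨k, m, Prod.ext (by linarith) hm.symm⟩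
  · rintro ⟨k, m, rfl⟩
    exact ⟨⟨k, by ring⟩, m, rfl⟩

theorem injOn_hexToTorus : InjOn hexToTorus Hex := by
  rintro t ⟨h1, h2, h3, h4, h5, h6⟩ t' ⟨h1', h2', h3', h4', h5', h6'⟩ heq
  have hker : hexToTorus (t - t') = 0 := by
    rw [← add_left_inj (hexToTorus t'), ← hexToTorus_add, sub_add_cancel, heq, zero_add]
  obtain ⟨k, m, hkm⟩ := hexToTorus_eq_zero_iff.1 hker
  obtain ⟨e1, e2⟩ := Prod.ext_iff.1 hkm
  simp only [Prod.fst_sub, Prod.snd_sub] at e1 e2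
  have hbounds : -2 < m ∧ m < 2 ∧ -2 < 3 * k + m ∧ 3 * k + m < 2 ∧
      -2 < 3 * k + 2 * m ∧ 3 * k + 2 * m < 2 := by
    refine ⟨?_, ?_, ?_, ?_, ?_, ?_⟩ <;> rw [← Int.cast_lt (R := ℝ)] <;> push_cast <;> linarith
  obtain ⟨rfl, rfl⟩ : k = 0 ∧ m = 0 := by omega
  simp only [Int.cast_zero, mul_zero, add_zero] at e1 e2
  exact Prod.ext (by linarith) (by linarith)

theorem measurableSet_hex : MeasurableSet Hex := by
  unfold Hex; measurability

@[fun_prop]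
theorem measurable_hexCoord : Measurable hexCoord := by
  unfold hexCoord; fun_prop

theorem measurable_hexToTorus : Measurable hexToTorus := by
  unfold hexToTorus; fun_prop

theorem map_hexCoord_volume : Measure.map hexCoord volume = (3 : ℝ≥0∞) • volume := by
  have hshear : MeasurePreserving (fun z : ℝ × ℝ => (z.1 - z.2, z.2)) := by
    simpa only [← Measure.volume_eq_prod] using
      measurePreserving_sub_prod (volume : Measure ℝ) volume
  have hscale : Measure.map (Prod.map (fun x : ℝ => 3⁻¹ * x) id) (volume : Measure (ℝ × ℝ)) =
      (3 : ℝ≥0∞) • volume := by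
    rw [Measure.volume_eq_prod, ← Measure.map_prod_map _ _ (measurable_const_mul _) measurable_id,
      Real.map_volume_mul_left (by norm_num), Measure.map_id, Measure.prod_smul_left]
    norm_num
  have hcomp : hexCoord = MeasurableEquiv.finTwoArrow.symm ∘ Prod.map (fun x : ℝ => 3⁻¹ * x) id ∘
      fun z : ℝ × ℝ => (z.1 - z.2, z.2) := by
    funext t i; fin_cases i <;> simp [hexCoord, div_eq_inv_mul]
  rw [hcomp, ← Measure.map_map (by fun_prop) (by fun_prop),
    ← Measure.map_map (by fun_prop) (by fun_prop), hshear.map_eq, hscale, Measure.map_smul,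
    (volume_preserving_finTwoArrow ℝ).symm.map_eq]

theorem map_hexToTorus_restrict_preimage_pi_Ico (a : Fin 2 → ℝ) :
    Measure.map hexToTorus (volume.restrict (hexCoord ⁻¹' univ.pi fun i => Ico (a i) (a i + 1))) =
      (3 : ℝ≥0∞) • haarTorus (Fin 2) := by
  have hbox : MeasurableSet (univ.pi fun i => Ico (a i) (a i + 1)) :=
    MeasurableSet.univ_pi fun _ => measurableSet_Ico
  rw [show hexToTorus = (fun x i => (x i : UnitAddCircle)) ∘ hexCoord from rfl,
    ← Measure.map_map (by fun_prop) measurable_hexCoord,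
    ← Measure.restrict_map measurable_hexCoord hbox, map_hexCoord_volume, Measure.restrict_smul,
    Measure.map_smul, map_coe_volume_restrict_pi_Ico]

def hexParallelogram : Set (ℝ × ℝ) := {t | -1 ≤ t.1 - t.2 ∧ t.1 - t.2 < 2 ∧ 0 ≤ t.2 ∧ t.2 < 1}

theorem map_hexToTorus_restrict_hexParallelogram :
    Measure.map hexToTorus (volume.restrict hexParallelogram) = (3 : ℝ≥0∞) • haarTorus (Fin 2) := by
  convert map_hexToTorus_restrict_preimage_pi_Ico ![-1 / 3, 0] using 3
  ext t
  simp only [hexParallelogram, hexCoord, mem_ofPred_eq, mem_preimage, mem_univ_pi,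
    Fin.forall_fin_two, mem_Ico, Matrix.cons_val_zero, Matrix.cons_val_one]
  grind

/-- Cut `Hex` along `t₁ - t₂ = -1` and `t₂ = 0`; the piece `t₂ < 0` is moved by the period
`(1, 1)` and the piece `t₁ - t₂ < -1` by the period `(3, 0)`. -/
theorem map_hexToTorus_restrict_hex :
    Measure.map hexToTorus (volume.restrict Hex) =
      Measure.map hexToTorus (volume.restrict hexParallelogram) := by
  let A : Set (ℝ × ℝ) := {t | -1 ≤ t.1 - t.2}
  let B : Set (ℝ × ℝ) := {t | 0 ≤ t.2}
  let C : Set (ℝ × ℝ) := {t | t.1 + t.2 < 1}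
  let D : Set (ℝ × ℝ) := {t | t.1 < 2}
  have hA : MeasurableSet A := measurableSet_le (by fun_prop) (by fun_prop)
  have hB : MeasurableSet B := measurableSet_le (by fun_prop) (by fun_prop)
  have hC : MeasurableSet C := measurableSet_lt (by fun_prop) (by fun_prop)
  have hD : MeasurableSet D := measurableSet_lt (by fun_prop) (by fun_prop)
  have h₀ : Hex ∩ A ∩ B = hexParallelogram ∩ C := by
    ext ⟨x, y⟩
    simp only [A, B, C, Hex, hexParallelogram, mem_inter_iff, mem_ofPred_eq]
    grind
  have h₁ : (· + ((-1 : ℝ), (-1 : ℝ))) ⁻¹' ((Hex ∩ A) \ B) = (hexParallelogram \ C) ∩ D := by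
    ext ⟨x, y⟩
    simp only [A, B, C, D, Hex, hexParallelogram, mem_inter_iff, Set.mem_sdiff, mem_preimage,
      mem_ofPred_eq, Prod.mk_add_mk]
    grind
  have h₂ : (· + ((-3 : ℝ), (0 : ℝ))) ⁻¹' (Hex \ A) = (hexParallelogram \ C) \ D := by
    ext ⟨x, y⟩
    simp only [A, C, D, Hex, hexParallelogram, Set.mem_sdiff, mem_preimage, mem_ofPred_eq,
      Prod.mk_add_mk]
    grind
  have hperiod {v : ℝ × ℝ} (hv : hexToTorus v = 0) (t : ℝ × ℝ) :
      hexToTorus (t + v) = hexToTorus t := by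
    rw [hexToTorus_add, hv, add_zero]
  rw [← Measure.restrict_inter_add_sdiff Hex hA, ← Measure.restrict_inter_add_sdiff (Hex ∩ A) hB,
    ← Measure.restrict_inter_add_sdiff hexParallelogram hC,
    ← Measure.restrict_inter_add_sdiff (hexParallelogram \ C) hD]
  simp only [Measure.map_add _ _ measurable_hexToTorus]
  rw [h₀, ← h₁, ← h₂, add_assoc,
    map_restrict_preimage_add_right measurable_hexToTorus
      (hperiod (hexToTorus_eq_zero_iff.2 ⟨0, -1, by norm_num⟩))
      ((measurableSet_hex.inter hA).diff hB),
    map_restrict_preimage_add_right measurable_hexToTorus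
      (hperiod (hexToTorus_eq_zero_iff.2 ⟨-1, 0, by norm_num⟩)) (measurableSet_hex.diff hA)]

theorem measurePreserving_hexToTorus :
    MeasurePreserving hexToTorus (volume.restrict Hex) ((3 : ℝ≥0∞) • haarTorus (Fin 2)) :=
  ⟨measurable_hexToTorus, by
    rw [map_hexToTorus_restrict_hex, map_hexToTorus_restrict_hexParallelogram]⟩

theorem hexVol_eq_three : hexVol = 3 := by
  have h := measurePreserving_hexToTorus.measure_preimage MeasurableSet.univ.nullMeasurableSet
  rw [preimage_univ, Measure.restrict_apply_univ, Measure.smul_apply, measure_univ, smul_eq_mul,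
    mul_one] at h
  rw [hexVol, h, ENNReal.toReal_ofNat]

theorem setIntegral_phiH_mul_conj (k j : ℤ × ℤ) :
    ∫ t in Hex, phiH k t * conj (phiH j t) = if k = j then 3 else 0 := by
  have hπ := measurePreserving_hexToTorus
  have hcont : Continuous fun x => mFourier (hexIndex k) x * conj (mFourier (hexIndex j) x) := by
    fun_prop
  simp_rw [phiH_eq_mFourier]
  rw [← integral_map hπ.aemeasurable hcont.aestronglyMeasurable, hπ.map_eq, integral_smul_measure,
    integral_mFourier_mul_conj]
  simp only [hexIndex.injective.eq_iff]
  rcases eq_or_ne k j with rfl | hkj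
  · norm_num
  · simp [hkj, hkj.symm]

/-- the functions `φ_j`, `j ∈ ℤ³_H`, form a complete orthonormal system in
`L²(Ω)` with respect to `⟨f,g⟩ = (1/|Ω|)∫_Ω f conj(g)`: they are orthonormal, and any
`f ∈ L²(Ω)` orthogonal to all of them vanishes. -/
theorem stmt0 :
    (∀ k j : ℤ × ℤ,
      (1 / hexVol : ℂ) * ∫ t in Hex, phiH k t * conj (phiH j t) =
        if k = j then 1 else 0) ∧
    (∀ f : MeasureTheory.Lp ℂ 2 (MeasureTheory.volume.restrict Hex),
      (∀ j : ℤ × ℤ, ∫ t in Hex, (f : ℝ × ℝ → ℂ) t * conj (phiH j t) = 0) → f = 0) := by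
  refine ⟨fun k j => ?_, fun f hf => ?_⟩
  · rw [setIntegral_phiH_mul_conj, hexVol_eq_three]
    split_ifs <;> norm_num
  · refine Lp.eq_zero_iff_ae_eq_zero.2 <|
      ae_eq_zero_of_forall_setIntegral_mul_conj_comp_eq_zero measurableSet_hex
        measurePreserving_hexToTorus injOn_hexToTorus (fun n => (mFourier n).continuous.measurable)
        (fun g => ae_eq_zero_of_forall_integral_mul_conj_mFourier_eq_zero (by simp)) (Lp.memLp f)
        fun n => ?_
    simpa only [phiH_eq_mFourier, Equiv.apply_symm_apply] using hf (hexIndex.symm n)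
end
end

section
/- Let n ≥ 1 and let t ∈ ℝ³_H be such that none of (t₁−t₂)/3, (t₂−t₃)/3, (t₃−t₁)/3 is an integer. Then D_n(t) = Θ_n(t) − Θ_{n−1}(t). -/
noncomputable section

open MeasureTheory Filter

/-- Third homogeneous coordinate: `t₃ = -(t₁+t₂)`. -/
def t3 (t : ℝ × ℝ) : ℝ := -(t.1 + t.2)

/-- The index set `ℍ_n = {j ∈ ℤ³_H : -n ≤ j₁,j₂,j₃ ≤ n}`, in the coordinates
`j = (j₁,j₂)`, `j₃ = -(j₁+j₂)`. -/
def HexIdx (n : ℕ) : Finset (ℤ × ℤ) :=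
  (Finset.Icc (-(n:ℤ), -(n:ℤ)) ((n:ℤ), (n:ℤ))).filter
    (fun j => -(n:ℤ) ≤ -(j.1 + j.2) ∧ -(j.1 + j.2) ≤ (n:ℤ))

/-- The hexagonal Dirichlet kernel `D_n = Σ_{j∈ℍ_n} φ_j`. -/
def Dker (n : ℕ) (t : ℝ × ℝ) : ℂ := ∑ j ∈ HexIdx n, phiH j t

/-- The function `Θ_n`. -/
def Theta (n : ℕ) (t : ℝ × ℝ) : ℝ :=
  (Real.sin ((n+1) * Real.pi * (t.1 - t.2) / 3) *
   Real.sin ((n+1) * Real.pi * (t.2 - t3 t) / 3) *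
   Real.sin ((n+1) * Real.pi * (t3 t - t.1) / 3)) /
  (Real.sin (Real.pi * (t.1 - t.2) / 3) *
   Real.sin (Real.pi * (t.2 - t3 t) / 3) *
   Real.sin (Real.pi * (t3 t - t.1) / 3))

/-!
With `X = e(t₁)`, `Y = e(t₂)`, `Z = e(t₃)`, `e(x) = exp(2πix/3)`, we have `XYZ = 1`, and shifting
exponents by `n` turns `D_n(t)` into the sum of the monomials `X^a Y^b Z^(3n-a-b)` over the hexagon
`a, b ≤ 2n`, `n ≤ a + b ≤ 3n`: the triangle `a + b ≤ 3n` minus three corners, each a translate of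
the triangle `a + b ≤ n - 1`. A complete homogeneous sum times the Vandermonde `(X-Y)(Y-Z)(Z-X)` is
an alternant, and using `XYZ = 1` the resulting combination of alternants is the difference of the
Vandermondes of `(n+1)`-st and `n`-th powers. Since `sin(πm(u-v)/3)` is `e(u)^m - e(v)^m` up to a
nonzero factor whose product over the three pairs is `i/8`, `Θ_m` is the quotient of the
Vandermondes of `(m+1)`-st and first powers.
-/

section CommRing

open Finset

variable {R : Type*} [CommRing R]

def triangle (m : ℕ) : Finset (ℕ × ℕ) :=
  (range (m + 1) ×ˢ range (m + 1)).filter fun k => k.1 + k.2 ≤ m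

lemma mem_triangle {m : ℕ} {k : ℕ × ℕ} : k ∈ triangle m ↔ k.1 + k.2 ≤ m := by
  simp only [triangle, mem_filter, mem_product, mem_range]
  omega

def triangleMonomial (X Y Z : R) (m : ℕ) (k : ℕ × ℕ) : R :=
  X ^ k.1 * Y ^ k.2 * Z ^ (m - k.1 - k.2)

def completeHomogeneous (X Y Z : R) (m : ℕ) : R :=
  ∑ k ∈ triangle m, triangleMonomial X Y Z m k

def vandermonde3 (X Y Z : R) : R := (X - Y) * (Y - Z) * (Z - X)

lemma completeHomogeneous_succ (X Y Z : R) (m : ℕ) :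
    completeHomogeneous X Y Z (m + 1) =
      Z * completeHomogeneous X Y Z m + ∑ k ∈ antidiagonal (m + 1), X ^ k.1 * Y ^ k.2 := by
  have hsplit : triangle (m + 1) = triangle m ∪ antidiagonal (m + 1) := by
    ext k
    simp only [mem_union, mem_triangle, HasAntidiagonal.mem_antidiagonal]
    omega
  have hdisj : Disjoint (triangle m) (antidiagonal (m + 1)) := by
    simp only [disjoint_left, mem_triangle, HasAntidiagonal.mem_antidiagonal]
    omega
  rw [completeHomogeneous, completeHomogeneous, hsplit, sum_union hdisj, mul_sum]
  congr 1
  · refine sum_congr rfl fun k hk => ?_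
    rw [mem_triangle] at hk
    rw [triangleMonomial, triangleMonomial, show m + 1 - k.1 - k.2 = m - k.1 - k.2 + 1 by omega,
      pow_succ]
    ring
  · refine sum_congr rfl fun k hk => ?_
    rw [HasAntidiagonal.mem_antidiagonal] at hk
    rw [triangleMonomial, ← hk, Nat.sub_sub, Nat.sub_self, pow_zero, mul_one]

lemma completeHomogeneous_mul_vandermonde3 (X Y Z : R) (m : ℕ) :
    completeHomogeneous X Y Z m * vandermonde3 X Y Z =
      X ^ (m + 2) * (Z - Y) + Y ^ (m + 2) * (X - Z) + Z ^ (m + 2) * (Y - X) := by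
  induction m with
  | zero =>
    rw [completeHomogeneous, show triangle 0 = {(0, 0)} by decide, sum_singleton,
      triangleMonomial, vandermonde3]
    ring
  | succ m ih =>
    have hgeom := geom_sum₂_mul X Y (m + 2)
    rw [show m + 2 - 1 = m + 1 from rfl,
      ← Nat.sum_antidiagonal_eq_sum_range_succ (fun i j => X ^ i * Y ^ j)] at hgeom
    rw [completeHomogeneous_succ, add_mul, mul_assoc, ih, vandermonde3]
    linear_combination (Y - Z) * (Z - X) * hgeom

lemma sum_triangle_filter_le_fst (X Y Z : R) {m s : ℕ} (hs : s ≤ m) :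
    ∑ k ∈ (triangle m).filter (fun k => s ≤ k.1), triangleMonomial X Y Z m k =
      X ^ s * completeHomogeneous X Y Z (m - s) := by
  rw [completeHomogeneous, mul_sum]
  refine sum_nbij' (fun k => (k.1 - s, k.2)) (fun l => (l.1 + s, l.2)) ?_ ?_ ?_ ?_ ?_
  all_goals simp only [mem_filter, mem_triangle, Prod.forall, Prod.mk.injEq, and_true]
  iterate 4 omega
  · intro i j hij
    rw [triangleMonomial, triangleMonomial, show m - i - j = m - s - (i - s) - j by omega,
      ← Nat.sub_add_cancel hij.2, Nat.add_sub_cancel, pow_add]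
    ring

lemma sum_triangle_filter_le_snd (X Y Z : R) {m s : ℕ} (hs : s ≤ m) :
    ∑ k ∈ (triangle m).filter (fun k => s ≤ k.2), triangleMonomial X Y Z m k =
      Y ^ s * completeHomogeneous X Y Z (m - s) := by
  rw [completeHomogeneous, mul_sum]
  refine sum_nbij' (fun k => (k.1, k.2 - s)) (fun l => (l.1, l.2 + s)) ?_ ?_ ?_ ?_ ?_
  all_goals simp only [mem_filter, mem_triangle, Prod.forall, Prod.mk.injEq, true_and]
  iterate 4 omega
  · intro i j hij
    rw [triangleMonomial, triangleMonomial, show m - i - j = m - s - i - (j - s) by omega,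
      ← Nat.sub_add_cancel hij.2, Nat.add_sub_cancel, pow_add]
    ring

lemma sum_triangle_filter_add_le (X Y Z : R) {m s : ℕ} (hs : s ≤ m) :
    ∑ k ∈ (triangle m).filter (fun k => k.1 + k.2 + s ≤ m), triangleMonomial X Y Z m k =
      Z ^ s * completeHomogeneous X Y Z (m - s) := by
  have hfilter : (triangle m).filter (fun k => k.1 + k.2 + s ≤ m) = triangle (m - s) := by
    ext k
    simp only [mem_filter, mem_triangle]
    omega
  rw [hfilter, completeHomogeneous, mul_sum]
  refine sum_congr rfl fun k hk => ?_
  rw [mem_triangle] at hk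
  rw [triangleMonomial, triangleMonomial, show m - k.1 - k.2 = s + (m - s - k.1 - k.2) by omega,
    pow_add]
  ring

def hexagon (n : ℕ) : Finset (ℕ × ℕ) :=
  (triangle (3 * n)).filter fun k => k.1 ≤ 2 * n ∧ k.2 ≤ 2 * n ∧ n ≤ k.1 + k.2

lemma completeHomogeneous_eq_sum_hexagon_add (X Y Z : R) {n : ℕ} (hn : 1 ≤ n) :
    completeHomogeneous X Y Z (3 * n) =
      ∑ k ∈ hexagon n, triangleMonomial X Y Z (3 * n) k +
        (X ^ (2 * n + 1) + Y ^ (2 * n + 1) + Z ^ (2 * n + 1)) *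
          completeHomogeneous X Y Z (n - 1) := by
  have hm : 3 * n - (2 * n + 1) = n - 1 := by omega
  rw [add_mul, add_mul, ← hm, ← sum_triangle_filter_le_fst X Y Z (by omega),
    ← sum_triangle_filter_le_snd X Y Z (by omega), ← sum_triangle_filter_add_le X Y Z (by omega),
    hexagon, sum_filter, sum_filter, sum_filter, sum_filter,
    ← sum_add_distrib, ← sum_add_distrib, ← sum_add_distrib,
    completeHomogeneous]
  refine sum_congr rfl fun k hk => ?_
  rw [mem_triangle] at hk
  split_ifs <;> first | omega | simp

lemma sum_hexagon_mul_vandermonde3 {X Y Z : R} (hXYZ : X * Y * Z = 1) {n : ℕ} (hn : 1 ≤ n) :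
    (∑ k ∈ hexagon n, triangleMonomial X Y Z (3 * n) k) * vandermonde3 X Y Z =
      vandermonde3 (X ^ (n + 1)) (Y ^ (n + 1)) (Z ^ (n + 1)) -
        vandermonde3 (X ^ n) (Y ^ n) (Z ^ n) := by
  have hbig := completeHomogeneous_mul_vandermonde3 X Y Z (3 * n)
  have hsmall := completeHomogeneous_mul_vandermonde3 X Y Z (n - 1)
  rw [completeHomogeneous_eq_sum_hexagon_add X Y Z hn, add_mul, mul_assoc, hsmall,
    show n - 1 + 2 = n + 1 by omega] at hbig
  simp only [vandermonde3, pow_succ, show 3 * n = n + n + n by ring, show 2 * n = n + n by ring,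
    pow_add] at hbig ⊢
  set P := X ^ n
  set Q := Y ^ n
  set S := Z ^ n
  linear_combination
    hbig + (P ^ 2 * Q - P ^ 2 * S - P * Q ^ 2 + P * S ^ 2 + Q ^ 2 * S - Q * S ^ 2) * hXYZ

end CommRing

lemma sum_hexIdx_zpow_eq_sum_hexagon {K : Type*} [Field K] {X Y Z : K} (hXYZ : X * Y * Z = 1)
    (n : ℕ) :
    ∑ j ∈ HexIdx n, X ^ j.1 * Y ^ j.2 * Z ^ (-(j.1 + j.2)) =
      ∑ k ∈ hexagon n, triangleMonomial X Y Z (3 * n) k := by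
  have hX : X ≠ 0 := left_ne_zero_of_mul (left_ne_zero_of_mul_eq_one hXYZ)
  have hY : Y ≠ 0 := right_ne_zero_of_mul (left_ne_zero_of_mul_eq_one hXYZ)
  have hZ : Z ≠ 0 := right_ne_zero_of_mul_eq_one hXYZ
  have hpow : X ^ n * Y ^ n * Z ^ n = 1 := by rw [← mul_pow, ← mul_pow, hXYZ, one_pow]
  symm
  refine Finset.sum_nbij' (fun k => ((k.1 : ℤ) - n, (k.2 : ℤ) - n))
    (fun j => ((j.1 + n).toNat, (j.2 + n).toNat)) ?_ ?_ ?_ ?_ ?_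
  all_goals simp only [hexagon, HexIdx, Finset.mem_filter, mem_triangle, Finset.mem_Icc,
    Prod.mk_le_mk, Prod.forall, Prod.mk.injEq]
  iterate 4 omega
  intro a b _
  rw [triangleMonomial,
    show -((a : ℤ) - n + ((b : ℤ) - n)) = ((3 * n - a - b : ℕ) : ℤ) - n by omega,
    zpow_sub₀ hX, zpow_sub₀ hY, zpow_sub₀ hZ, zpow_natCast, zpow_natCast, zpow_natCast,
    zpow_natCast, zpow_natCast, zpow_natCast, div_mul_div_comm, div_mul_div_comm, hpow, div_one]

def expThird (x : ℝ) : ℂ := Complex.exp (2 * Real.pi * Complex.I * x / 3)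

lemma expThird_mul_expThird_mul_expThird_t3 (t : ℝ × ℝ) :
    expThird t.1 * expThird t.2 * expThird (t3 t) = 1 := by
  rw [expThird, expThird, expThird, ← Complex.exp_add, ← Complex.exp_add, t3, ← Complex.exp_zero]
  push_cast
  ring_nf

lemma phiH_eq (j : ℤ × ℤ) (t : ℝ × ℝ) :
    phiH j t = expThird t.1 ^ j.1 * expThird t.2 ^ j.2 * expThird (t3 t) ^ (-(j.1 + j.2)) := by
  rw [expThird, expThird, expThird, ← Complex.exp_int_mul, ← Complex.exp_int_mul,
    ← Complex.exp_int_mul, ← Complex.exp_add, ← Complex.exp_add, phiH, t3]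
  push_cast
  ring_nf

lemma Dker_eq_sum_hexagon (n : ℕ) (t : ℝ × ℝ) :
    Dker n t = ∑ k ∈ hexagon n,
      triangleMonomial (expThird t.1) (expThird t.2) (expThird (t3 t)) (3 * n) k := by
  simp only [Dker, phiH_eq]
  exact sum_hexIdx_zpow_eq_sum_hexagon (expThird_mul_expThird_mul_expThird_t3 t) n

lemma ofReal_sin_mul_sin_mul_sin (m : ℕ) {a b c : ℝ} (habc : a + b + c = 0) :
    ((Real.sin (m * Real.pi * (a - b) / 3) * Real.sin (m * Real.pi * (b - c) / 3) *
        Real.sin (m * Real.pi * (c - a) / 3) : ℝ) : ℂ) =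
      Complex.I / 8 * vandermonde3 (expThird a ^ m) (expThird b ^ m) (expThird c ^ m) := by
  set h : ℝ → ℂ := fun u => Complex.exp (m * Real.pi * Complex.I * u / 3) with h_def
  have hne : ∀ u, h u ≠ 0 := fun u => Complex.exp_ne_zero _
  have hsin : ∀ u v : ℝ, (Real.sin (m * Real.pi * (u - v) / 3) : ℂ) =
      (h v / h u - h u / h v) * Complex.I / 2 := by
    intro u v
    rw [Complex.ofReal_sin, Complex.sin, h_def, ← Complex.exp_sub, ← Complex.exp_sub]
    push_cast
    ring_nf
  have hsq : ∀ u, expThird u ^ m = h u ^ 2 := by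
    intro u
    rw [expThird, h_def, ← Complex.exp_nat_mul, ← Complex.exp_nat_mul]
    ring_nf
  have hprod : h a * h b * h c = 1 := by
    rw [h_def, ← Complex.exp_add, ← Complex.exp_add, ← Complex.exp_zero]
    have habc' : (a : ℂ) + b + c = 0 := by exact_mod_cast habc
    congr 1
    linear_combination (m * Real.pi * Complex.I / 3 : ℂ) * habc'
  rw [Complex.ofReal_mul, Complex.ofReal_mul, hsin, hsin, hsin, hsq, hsq, hsq, vandermonde3]
  have ha := hne a
  have hb := hne b
  have hc := hne c
  generalize h a = x, h b = y, h c = z at *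
  field_simp
  linear_combination (-8 * (x ^ 2 - y ^ 2) * (y ^ 2 - z ^ 2) * (z ^ 2 - x ^ 2)) *
    (Complex.I_sq + (x * y * z + 1) * hprod)

lemma ofReal_Theta (m : ℕ) (t : ℝ × ℝ) :
    (Theta m t : ℂ) =
      vandermonde3 (expThird t.1 ^ (m + 1)) (expThird t.2 ^ (m + 1)) (expThird (t3 t) ^ (m + 1)) /
        vandermonde3 (expThird t.1) (expThird t.2) (expThird (t3 t)) := by
  have hsum : t.1 + t.2 + t3 t = 0 := by rw [t3]; ring
  have hnum := ofReal_sin_mul_sin_mul_sin (m + 1) hsum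
  have hden := ofReal_sin_mul_sin_mul_sin 1 hsum
  rw [Nat.cast_succ] at hnum
  simp only [Nat.cast_one, one_mul, pow_one] at hden
  rw [Theta, Complex.ofReal_div, hnum, hden,
    mul_div_mul_left _ _ (div_ne_zero Complex.I_ne_zero (by norm_num))]

lemma sin_pi_mul_div_three_ne_zero {x : ℝ} (hx : ∀ m : ℤ, x / 3 ≠ m) :
    Real.sin (Real.pi * x / 3) ≠ 0 := by
  rw [Ne, Real.sin_eq_zero_iff, not_exists]
  intro m hm
  exact hx m (mul_right_cancel₀ Real.pi_ne_zero (by rw [hm]; ring))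

lemma vandermonde3_expThird_ne_zero {t : ℝ × ℝ}
    (h1 : ∀ m : ℤ, (t.1 - t.2) / 3 ≠ m) (h2 : ∀ m : ℤ, (t.2 - t3 t) / 3 ≠ m)
    (h3 : ∀ m : ℤ, (t3 t - t.1) / 3 ≠ m) :
    vandermonde3 (expThird t.1) (expThird t.2) (expThird (t3 t)) ≠ 0 := by
  have hden := ofReal_sin_mul_sin_mul_sin 1 (show t.1 + t.2 + t3 t = 0 by rw [t3]; ring)
  simp only [Nat.cast_one, one_mul, pow_one] at hden
  intro hV
  rw [hV, mul_zero, Complex.ofReal_eq_zero] at hden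
  exact mul_ne_zero (mul_ne_zero (sin_pi_mul_div_three_ne_zero h1)
    (sin_pi_mul_div_three_ne_zero h2)) (sin_pi_mul_div_three_ne_zero h3) hden

/-- the compact formula `D_n = Θ_n - Θ_{n-1}` for the hexagonal
Dirichlet kernel, valid whenever none of `(t₁-t₂)/3`, `(t₂-t₃)/3`, `(t₃-t₁)/3`
is an integer. -/
theorem stmt1 (n : ℕ) (hn : 1 ≤ n) (t : ℝ × ℝ)
    (h1 : ∀ m : ℤ, (t.1 - t.2) / 3 ≠ (m : ℝ))
    (h2 : ∀ m : ℤ, (t.2 - t3 t) / 3 ≠ (m : ℝ))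
    (h3 : ∀ m : ℤ, (t3 t - t.1) / 3 ≠ (m : ℝ)) :
    Dker n t = ((Theta n t - Theta (n - 1) t : ℝ) : ℂ) := by
  rw [Complex.ofReal_sub, ofReal_Theta, ofReal_Theta, Nat.sub_add_cancel hn, div_sub_div_same,
    eq_div_iff (vandermonde3_expThird_ne_zero h1 h2 h3), Dker_eq_sum_hexagon]
  exact sum_hexagon_mul_vandermonde3 (expThird_mul_expThird_mul_expThird_t3 t) hn
end
end

section
/- For every n ≥ 0 and every t ∈ ℝ³_H, the Cesàro (C,2) kernel of the hexagonal Fourier series is nonnegative: Σ_{k=0}^n (n−k+1)·D_k(t) is a nonnegative real number. Consequently the (C,2) means S_n^{(2)}f(t) := (1/(C(n+2,2)·|Ω|)) ∫_Ω f(t−s)·[Σ_{k=0}^n (n−k+1)·D_k(s)] ds define positive linear operators on H-periodic functions. -/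
noncomputable section

open MeasureTheory Filter

def HPeriodic (f : ℝ × ℝ → ℂ) : Prop :=
  ∀ j : ℤ × ℤ, (3 : ℤ) ∣ (j.1 - j.2) → (3 : ℤ) ∣ (j.2 - (-(j.1 + j.2))) →
    ∀ t : ℝ × ℝ, f (t.1 + (j.1 : ℝ), t.2 + (j.2 : ℝ)) = f t

def Ces2Ker (n : ℕ) (t : ℝ × ℝ) : ℂ :=
  ∑ k ∈ Finset.range (n + 1), ((n - k + 1 : ℕ) : ℂ) * Dker k t

def Ces2Mean (f : ℝ × ℝ → ℂ) (n : ℕ) (t : ℝ × ℝ) : ℂ :=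
  ((1 / (((n + 2).choose 2 : ℝ) * hexVol) : ℝ) : ℂ) *
    ∫ s in Hex, f (t.1 - s.1, t.2 - s.2) * Ces2Ker n s

/-!
The (C,2) kernel is a squared modulus: `Σ_{k ≤ n} (n-k+1) D_k(t) = |Σ_{p ∈ T_n} φ_p(t)|²`, where
`T_n = {p ∈ ℕ² : p₁ + p₂ ≤ n}`. Expanding the square gives `Σ_{p,q ∈ T_n} φ_{p-q}(t)`, and for
`j ∈ ℍ_n` the number of pairs with `p - q = j` is `Σ_{|j| ≤ k ≤ n} (n-k+1)`, the coefficient of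
`φ_j` in the kernel (`|j|` the hexagonal norm). Integrating the nonnegative kernel against a
nonnegative function then gives a nonnegative mean.
-/

open scoped ComplexOrder

def hexNorm (j : ℤ × ℤ) : ℕ := max (max j.1.natAbs j.2.natAbs) (j.1 + j.2).natAbs

lemma mem_HexIdx_iff {n : ℕ} {j : ℤ × ℤ} : j ∈ HexIdx n ↔ hexNorm j ≤ n := by
  simp only [HexIdx, hexNorm, Finset.mem_filter, Finset.mem_Icc, Prod.le_def]
  omega

def natTriangle (n : ℕ) : Finset (ℕ × ℕ) :=
  (Finset.range (n + 1) ×ˢ Finset.range (n + 1)).filter fun p => p.1 + p.2 ≤ n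

lemma mem_natTriangle_iff {n : ℕ} {p : ℕ × ℕ} : p ∈ natTriangle n ↔ p.1 + p.2 ≤ n := by
  simp only [natTriangle, Finset.mem_filter, Finset.mem_product, Finset.mem_range]
  omega

lemma phiH_sub (p q : ℤ × ℤ) (t : ℝ × ℝ) :
    phiH (p.1 - q.1, p.2 - q.2) t = phiH p t * star (phiH q t) := by
  unfold phiH
  rw [Complex.star_def, ← Complex.exp_conj, ← Complex.exp_add]
  congr 1
  simp only [map_div₀, map_mul, map_add, map_ofNat, Complex.conj_I, Complex.conj_ofReal,
    map_intCast]
  push_cast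
  ring

/-- A triple `⟨k, m, j⟩` stands for the term `φ_j` of `D_k`, repeated for `m ≤ n - k`. -/
def ces2Index (n : ℕ) : Finset (Σ _ : ℕ, Σ _ : ℕ, ℤ × ℤ) :=
  (Finset.range (n + 1)).sigma fun k => (Finset.range (n - k + 1)).sigma fun _ => HexIdx k

lemma mem_ces2Index_iff {n k m : ℕ} {j : ℤ × ℤ} :
    ⟨k, m, j⟩ ∈ ces2Index n ↔ k + m ≤ n ∧ hexNorm j ≤ k := by
  simp only [ces2Index, Finset.mem_sigma, Finset.mem_range, mem_HexIdx_iff]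
  omega

lemma Ces2Ker_eq_sum_ces2Index (n : ℕ) (t : ℝ × ℝ) :
    Ces2Ker n t = ∑ x ∈ ces2Index n, phiH x.2.2 t := by
  simp only [Ces2Ker, Dker, ces2Index, Finset.sum_sigma, Finset.sum_const, Finset.card_range,
    nsmul_eq_mul]

def diffPairOfIndex (x : Σ _ : ℕ, Σ _ : ℕ, ℤ × ℤ) : (ℕ × ℕ) × (ℕ × ℕ) :=
  ((x.1 - hexNorm x.2.2 + x.2.2.1.toNat, x.2.1 + x.2.2.2.toNat),
   (x.1 - hexNorm x.2.2 + (-x.2.2.1).toNat, x.2.1 + (-x.2.2.2).toNat))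

def indexOfDiffPair (y : (ℕ × ℕ) × (ℕ × ℕ)) : Σ _ : ℕ, Σ _ : ℕ, ℤ × ℤ :=
  ⟨min y.1.1 y.2.1 + hexNorm ((y.1.1 : ℤ) - y.2.1, (y.1.2 : ℤ) - y.2.2),
   min y.1.2 y.2.2, ((y.1.1 : ℤ) - y.2.1, (y.1.2 : ℤ) - y.2.2)⟩

lemma Ces2Ker_eq_sum_pairs (n : ℕ) (t : ℝ × ℝ) :
    Ces2Ker n t = ∑ y ∈ natTriangle n ×ˢ natTriangle n,
      phiH ((y.1.1 : ℤ) - y.2.1, (y.1.2 : ℤ) - y.2.2) t := by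
  rw [Ces2Ker_eq_sum_ces2Index]
  refine Finset.sum_nbij' diffPairOfIndex indexOfDiffPair ?_ ?_ ?_ ?_ ?_
  · rintro ⟨k, m, j₁, j₂⟩ hx
    simp only [mem_ces2Index_iff, hexNorm] at hx
    simp only [diffPairOfIndex, hexNorm, Finset.mem_product, mem_natTriangle_iff]
    omega
  · rintro ⟨⟨p₁, p₂⟩, q₁, q₂⟩ hy
    simp only [Finset.mem_product, mem_natTriangle_iff] at hy
    simp only [indexOfDiffPair, mem_ces2Index_iff, hexNorm]
    omega
  · rintro ⟨k, m, j₁, j₂⟩ hx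
    simp only [mem_ces2Index_iff, hexNorm] at hx
    simp only [diffPairOfIndex, indexOfDiffPair, hexNorm, Sigma.mk.inj_iff, heq_eq_eq,
      Prod.mk.injEq]
    omega
  · rintro ⟨⟨p₁, p₂⟩, q₁, q₂⟩ -
    simp only [diffPairOfIndex, indexOfDiffPair, hexNorm, Prod.mk.injEq]
    omega
  · rintro ⟨k, m, j₁, j₂⟩ hx
    simp only [mem_ces2Index_iff, hexNorm] at hx
    simp only [diffPairOfIndex, hexNorm]
    congr 2 <;> omega

lemma Ces2Ker_eq_mul_star_self (n : ℕ) (t : ℝ × ℝ) :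
    Ces2Ker n t = (∑ p ∈ natTriangle n, phiH (p.1, p.2) t) *
      star (∑ p ∈ natTriangle n, phiH (p.1, p.2) t) := by
  rw [Ces2Ker_eq_sum_pairs, star_sum, Finset.sum_mul_sum, ← Finset.sum_product']
  refine Finset.sum_congr rfl fun y _ => ?_
  exact phiH_sub (y.1.1, y.1.2) (y.2.1, y.2.2) t

lemma Ces2Ker_nonneg (n : ℕ) (t : ℝ × ℝ) : 0 ≤ Ces2Ker n t :=
  Ces2Ker_eq_mul_star_self n t ▸ mul_star_self_nonneg _

lemma Ces2Mean_nonneg {f : ℝ × ℝ → ℂ} (hf : 0 ≤ f) (n : ℕ) (t : ℝ × ℝ) :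
    0 ≤ Ces2Mean f n t := by
  have hconst : (0 : ℝ) ≤ 1 / (((n + 2).choose 2 : ℝ) * hexVol) := by
    unfold hexVol; positivity
  exact mul_nonneg (Complex.zero_le_real.mpr hconst)
    (integral_nonneg fun s => mul_nonneg (hf _) (Ces2Ker_nonneg n s))

lemma Complex.im_eq_zero_and_re_nonneg {z : ℂ} (hz : 0 ≤ z) : z.im = 0 ∧ 0 ≤ z.re :=
  ⟨(Complex.nonneg_iff.mp hz).2.symm, (Complex.nonneg_iff.mp hz).1⟩

/-- the Cesàro `(C,2)` kernel of the hexagonal Fourier series is a nonnegative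
real number at every point; consequently the `(C,2)` means are positive operators on
`H`-periodic functions: they take nonnegative (real-valued) functions to nonnegative
(real-valued) functions. -/
theorem stmt6 :
    (∀ (n : ℕ) (t : ℝ × ℝ), (Ces2Ker n t).im = 0 ∧ 0 ≤ (Ces2Ker n t).re) ∧
    (∀ f : ℝ × ℝ → ℂ, HPeriodic f → (∀ s, (f s).im = 0 ∧ 0 ≤ (f s).re) →
      ∀ (n : ℕ) (t : ℝ × ℝ), (Ces2Mean f n t).im = 0 ∧ 0 ≤ (Ces2Mean f n t).re) := by
  refine ⟨fun n t => Complex.im_eq_zero_and_re_nonneg (Ces2Ker_nonneg n t),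
    fun f _ hf n t => Complex.im_eq_zero_and_re_nonneg (Ces2Mean_nonneg ?_ n t)⟩
  exact fun s => Complex.nonneg_iff.mpr ⟨(hf s).2, (hf s).1.symm⟩
end
end

section
/- Let f : ℝ³_H → ℂ be H-periodic and continuous. Define g on Ω* := {(s₁,s₂) ∈ ℝ² : −1 ≤ s₁, s₂, s₁+s₂ ≤ 1} by g(s₁,s₂) := f(2s₁−s₂, 2s₂−s₁, −s₁−s₂), and let g* : [−1,1]² → ℂ be any continuous extension of g. For m ≥ 0 let 𝒯_m := span_ℂ{(u₁,u₂) ↦ exp(2πi(k₁u₁+k₂u₂)) : k₁,k₂ ∈ ℤ, |k₁| ≤ m, |k₂| ≤ m} and ℰ_m(g*) := inf_{T∈𝒯_m} max_{u∈[−1,1]²} |g*(u) − T(u)|. Then for every n ≥ 1, E_n(f)_∞ ≤ ℰ_{⌊n/2⌋}(g*). -/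
noncomputable section

open MeasureTheory Filter

/-- `𝓗_n = span{φ_j : j ∈ ℍ_n}`, the hexagonal trigonometric polynomials of degree `n`. -/
def HexSpan (n : ℕ) : Submodule ℂ (ℝ × ℝ → ℂ) :=
  Submodule.span ℂ (phiH '' (HexIdx n : Set (ℤ × ℤ)))

/-- Sup norm over a set. -/
def supNormOn (f : ℝ × ℝ → ℂ) (K : Set (ℝ × ℝ)) : ℝ := ⨆ t : K, ‖f t‖

/-- Best approximation `E_n(f)_∞` by elements of `𝓗_n` in the uniform norm on `Ω̄`. -/
def EbestInf (n : ℕ) (f : ℝ × ℝ → ℂ) : ℝ :=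
  ⨅ S : HexSpan n, supNormOn (fun t => f t - (S : ℝ × ℝ → ℂ) t) (closure Hex)

/-- The bivariate trigonometric polynomials `𝒯_m` of degree `≤ m` in each variable. -/
def TrigSpan (m : ℕ) : Submodule ℂ (ℝ × ℝ → ℂ) :=
  Submodule.span ℂ {g | ∃ k : ℤ × ℤ, k.1.natAbs ≤ m ∧ k.2.natAbs ≤ m ∧
    g = fun u : ℝ × ℝ => Complex.exp (2 * Real.pi * Complex.I * ((k.1 : ℂ) * u.1 + (k.2 : ℂ) * u.2))}

/-- `ℰ_m(g)`: best uniform approximation of `g` on `[-1,1]²` by elements of `𝒯_m`. -/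
def EbestTrig (m : ℕ) (g : ℝ × ℝ → ℂ) : ℝ :=
  ⨅ T : TrigSpan m, supNormOn (fun u => g u - (T : ℝ × ℝ → ℂ) u) (Set.Icc (-1, -1) (1, 1))

/-- The region `Ω* = {s : -1 ≤ s₁, s₂, s₁+s₂ ≤ 1}`. -/
def OmegaStar : Set (ℝ × ℝ) :=
  {s | -1 ≤ s.1 ∧ s.1 ≤ 1 ∧ -1 ≤ s.2 ∧ s.2 ≤ 1 ∧ -1 ≤ s.1 + s.2 ∧ s.1 + s.2 ≤ 1}

/-!
The linear substitution `t = (2s₁ - s₂, 2s₂ - s₁)` carries the exponential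
`exp(2πi(k₁s₁ + k₂s₂))` to `φ_k`, and `k ∈ ℍ_n` as soon as `|k₁|, |k₂| ≤ n/2`. Its inverse `ψ`
maps the closed hexagon into `Ω* ⊆ [-1,1]²`, where `g* ∘ ψ` agrees with `f`. So every
`T ∈ 𝒯_{⌊n/2⌋}` yields `T ∘ ψ ∈ 𝓗_n` with `‖f - T ∘ ψ‖_{Ω̄} ≤ max_{[-1,1]²} |g* - T|`.
-/

open Set

/-- The map `ψ`, inverse of `s ↦ (2s₁ - s₂, 2s₂ - s₁)`. -/
def hexToStar (t : ℝ × ℝ) : ℝ × ℝ := ((2 * t.1 + t.2) / 3, (t.1 + 2 * t.2) / 3)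

lemma starToHex_hexToStar (t : ℝ × ℝ) :
    (2 * (hexToStar t).1 - (hexToStar t).2, 2 * (hexToStar t).2 - (hexToStar t).1) = t := by
  ext <;> simp only [hexToStar] <;> ring

lemma isClosed_omegaStar : IsClosed OmegaStar := by
  simp only [OmegaStar, ofPred_and]
  apply_rules [IsClosed.inter, isClosed_le] <;> fun_prop

lemma omegaStar_subset_Icc : OmegaStar ⊆ Icc (-1, -1) (1, 1) :=
  fun _ ⟨h₁, h₂, h₃, h₄, _, _⟩ => ⟨⟨h₁, h₃⟩, ⟨h₂, h₄⟩⟩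

lemma mapsTo_hexToStar_closure_hex : MapsTo hexToStar (closure Hex) OmegaStar := by
  refine closure_minimal ?_ (isClosed_omegaStar.preimage (by unfold hexToStar; fun_prop))
  rintro t ⟨h₁, h₂, h₃, h₄, h₅, h₆⟩
  simp only [OmegaStar, hexToStar]
  refine ⟨?_, ?_, ?_, ?_, ?_, ?_⟩ <;> linarith

lemma exp_comp_hexToStar (k : ℤ × ℤ) :
    (fun u : ℝ × ℝ => Complex.exp (2 * Real.pi * Complex.I * ((k.1 : ℂ) * u.1 + (k.2 : ℂ) * u.2)))
      ∘ hexToStar = phiH k := by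
  funext t
  simp only [Function.comp_apply, phiH, hexToStar]
  congr 1
  push_cast
  ring

lemma comp_hexToStar_mem_hexSpan {m n : ℕ} (hmn : 2 * m ≤ n) {T : ℝ × ℝ → ℂ}
    (hT : T ∈ TrigSpan m) : T ∘ hexToStar ∈ HexSpan n := by
  suffices TrigSpan m ≤ (HexSpan n).comap (LinearMap.funLeft ℂ ℂ hexToStar) from this hT
  rw [TrigSpan, Submodule.span_le]
  rintro _ ⟨k, hk₁, hk₂, rfl⟩
  rw [SetLike.mem_coe, Submodule.mem_comap, LinearMap.funLeft, LinearMap.coe_mk, AddHom.coe_mk,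
    exp_comp_hexToStar]
  refine Submodule.subset_span ⟨k, ?_, rfl⟩
  rw [Finset.mem_coe, HexIdx, Finset.mem_filter, Finset.mem_Icc, Prod.mk_le_mk, Prod.mk_le_mk]
  omega

lemma continuous_of_mem_trigSpan {m : ℕ} {T : ℝ × ℝ → ℂ} (hT : T ∈ TrigSpan m) :
    Continuous T := by
  induction hT using Submodule.span_induction with
  | mem _ hg => obtain ⟨k, -, -, rfl⟩ := hg; fun_prop
  | zero => exact continuous_const
  | add _ _ _ _ h₁ h₂ => exact h₁.add h₂
  | smul c _ _ h => exact h.const_smul c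

lemma supNormOn_nonneg (f : ℝ × ℝ → ℂ) (K : Set (ℝ × ℝ)) : 0 ≤ supNormOn f K :=
  Real.iSup_nonneg fun _ => norm_nonneg _

lemma supNormOn_le_of_eqOn_comp {f g : ℝ × ℝ → ℂ} {φ : ℝ × ℝ → ℝ × ℝ} {A B : Set (ℝ × ℝ)}
    (hφ : MapsTo φ A B) (hfg : EqOn f (g ∘ φ) A) (hg : BddAbove (range fun u : B => ‖g u‖)) :
    supNormOn f A ≤ supNormOn g B :=
  Real.iSup_le (fun t => (hfg t.2).symm ▸ le_ciSup hg ⟨φ t, hφ t.2⟩) (supNormOn_nonneg g B)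

lemma bddAbove_norm_of_continuousOn {g : ℝ × ℝ → ℂ} {K : Set (ℝ × ℝ)} (hK : IsCompact K)
    (hg : ContinuousOn g K) : BddAbove (range fun u : K => ‖g u‖) := by
  simpa only [image_eq_range] using hK.bddAbove_image hg.norm

lemma ebestInf_le {n : ℕ} (f : ℝ × ℝ → ℂ) {S : ℝ × ℝ → ℂ} (hS : S ∈ HexSpan n) :
    EbestInf n f ≤ supNormOn (fun t => f t - S t) (closure Hex) :=
  ciInf_le ⟨0, by rintro _ ⟨S, rfl⟩; exact supNormOn_nonneg _ _⟩ (⟨S, hS⟩ : HexSpan n)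

theorem stmt9_general (f : ℝ × ℝ → ℂ)
    (gstar : ℝ × ℝ → ℂ) (hgc : ContinuousOn gstar (Set.Icc (-1, -1) (1, 1)))
    (hext : ∀ s ∈ OmegaStar, gstar s = f (2 * s.1 - s.2, 2 * s.2 - s.1))
    (n : ℕ) :
    EbestInf n f ≤ EbestTrig (n / 2) gstar := by
  have : Nonempty (TrigSpan (n / 2)) := ⟨0⟩
  refine le_ciInf fun ⟨T, hT⟩ => ?_
  have hagree : EqOn (fun t => f t - (T ∘ hexToStar) t) ((fun u => gstar u - T u) ∘ hexToStar)
      (closure Hex) := fun t ht => by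
    simp only [Function.comp_apply, hext _ (mapsTo_hexToStar_closure_hex ht),
      starToHex_hexToStar]
  calc EbestInf n f ≤ supNormOn (fun t => f t - (T ∘ hexToStar) t) (closure Hex) :=
        ebestInf_le f (comp_hexToStar_mem_hexSpan (Nat.mul_div_le n 2) hT)
    _ ≤ supNormOn (fun u => gstar u - T u) (Icc (-1, -1) (1, 1)) :=
        supNormOn_le_of_eqOn_comp (mapsTo_hexToStar_closure_hex.mono_right omegaStar_subset_Icc)
          hagree (bddAbove_norm_of_continuousOn isCompact_Icc
            (hgc.sub (continuous_of_mem_trigSpan hT).continuousOn))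

/-- if `f` is `H`-periodic and continuous, `g(s₁,s₂) = f(2s₁-s₂, 2s₂-s₁, -s₁-s₂)`
on `Ω*`, and `g*` is a continuous extension of `g` to `[-1,1]²`, then
`E_n(f)_∞ ≤ ℰ_{⌊n/2⌋}(g*)`. -/
theorem stmt9 (f : ℝ × ℝ → ℂ) (hper : HPeriodic f) (hc : Continuous f)
    (gstar : ℝ × ℝ → ℂ) (hgc : ContinuousOn gstar (Set.Icc (-1, -1) (1, 1)))
    (hext : ∀ s ∈ OmegaStar, gstar s = f (2 * s.1 - s.2, 2 * s.2 - s.1))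
    (n : ℕ) (hn : 1 ≤ n) :
    EbestInf n f ≤ EbestTrig (n / 2) gstar :=
  stmt9_general f gstar hgc hext n
end
end
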